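/- Let G be a commutative group, n = k + 1 ≥ 3, and suppose x : Fin k → Fin k → G solves x i j · x j s · (x i s)⁻¹ = q i j · q j s · (q i s)⁻¹ for all i, j, s < k. Extend x by x (1)(k+1) := 1, x (i)(k+1) := q 1 i · q i (k+1) · (q 1 (k+1))⁻¹ · (x 1 i)⁻¹ for 2 ≤ i ≤ k, and x (k+1)(i) := (x i (k+1))⁻¹ · q i (k+1) · q (k+1) i for 1 ≤ i ≤ k, and x (k+1)(k+1) := q (k+1)(k+1). Then the extended x solves the full system x i j · x j s · (x i s)⁻¹ = q i j · q j s · (q i s)⁻¹ for all i, j, s ∈ Fin (k+1). -/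
import Mathlib

theorem stmt_14 (G : Type*) [CommGroup G] (k : ℕ) (hk : 2 ≤ k)
    (x q : ℕ → ℕ → G)
    (hIH : ∀ i j s, 1 ≤ i → i ≤ k → 1 ≤ j → j ≤ k → 1 ≤ s → s ≤ k →
      x i j * x j s * (x i s)⁻¹ = q i j * q j s * (q i s)⁻¹)
    (h1 : x 1 (k + 1) = 1)
    (h2 : ∀ i, 2 ≤ i → i ≤ k →
      x i (k + 1) = q 1 i * q i (k + 1) * (q 1 (k + 1))⁻¹ * (x 1 i)⁻¹)
    (h3 : ∀ i, 1 ≤ i → i ≤ k →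
      x (k + 1) i = (x i (k + 1))⁻¹ * q i (k + 1) * q (k + 1) i)
    (h4 : x (k + 1) (k + 1) = q (k + 1) (k + 1)) :
    ∀ i j s, 1 ≤ i → i ≤ k + 1 → 1 ≤ j → j ≤ k + 1 → 1 ≤ s → s ≤ k + 1 →
      x i j * x j s * (x i s)⁻¹ = q i j * q j s * (q i s)⁻¹ := by
  have hx11 : x 1 1 = q 1 1 := by
    have e := hIH 1 1 1 le_rfl (by omega) le_rfl (by omega) le_rfl (by omega)
    simpa using e
  -- general formula for x i (k+1), i ≤ k
  have hA : ∀ i, 1 ≤ i → i ≤ k →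
      x i (k + 1) = q 1 i * q i (k + 1) * (q 1 (k + 1))⁻¹ * (x 1 i)⁻¹ := by
    intro i hi1 hik
    rcases Nat.lt_or_ge i 2 with h | h
    · interval_cases i
      rw [h1, hx11]
      apply Additive.ofMul.injective
      simp only [ofMul_mul, ofMul_inv, ofMul_one]
      abel
    · exact h2 i h hik
  -- general formula for x i j, i, j ≤ k
  have hE : ∀ i j, 1 ≤ i → i ≤ k → 1 ≤ j → j ≤ k →
      x i j = (x 1 i)⁻¹ * (q 1 i * q i j * (q 1 j)⁻¹) * x 1 j := by
    intro i j hi1 hik hj1 hjk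
    have e := hIH 1 i j le_rfl (by omega) hi1 hik hj1 hjk
    rw [← e]
    group
  -- general formula for x (k+1) i, i ≤ k
  have hB : ∀ i, 1 ≤ i → i ≤ k →
      x (k + 1) i = (q 1 i * q i (k + 1) * (q 1 (k + 1))⁻¹ * (x 1 i)⁻¹)⁻¹
        * q i (k + 1) * q (k + 1) i := by
    intro i hi1 hik
    rw [h3 i hi1 hik, hA i hi1 hik]
  intro i j s hi1 hik hj1 hjk hs1 hsk
  have hi : i ≤ k ∨ i = k + 1 := by omega
  have hj : j ≤ k ∨ j = k + 1 := by omega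
  have hs : s ≤ k ∨ s = k + 1 := by omega
  rcases hi with hi | hi <;> rcases hj with hj | hj <;> rcases hs with hs | hs
  · exact hIH i j s hi1 hi hj1 hj hs1 hs
  · subst hs
    rw [hE i j hi1 hi hj1 hj, hA i hi1 hi, hA j hj1 hj]
    apply Additive.ofMul.injective
    simp only [ofMul_mul, ofMul_inv]
    abel
  · subst hj
    rw [hA i hi1 hi, hB s hs1 hs, hE i s hi1 hi hs1 hs]
    apply Additive.ofMul.injective
    simp only [ofMul_mul, ofMul_inv]
    abel
  · subst hj; subst hs
    rw [hA i hi1 hi, h4]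
    apply Additive.ofMul.injective
    simp only [ofMul_mul, ofMul_inv]
    abel
  · subst hi
    rw [hB j hj1 hj, hE j s hj1 hj hs1 hs, hB s hs1 hs]
    apply Additive.ofMul.injective
    simp only [ofMul_mul, ofMul_inv]
    abel
  · subst hi; subst hs
    rw [hB j hj1 hj, hA j hj1 hj, h4]
    apply Additive.ofMul.injective
    simp only [ofMul_mul, ofMul_inv]
    abel
  · subst hi; subst hj
    rw [h4, hB s hs1 hs]
    apply Additive.ofMul.injective
    simp only [ofMul_mul, ofMul_inv]
    abel
  · subst hi; subst hj; subst hs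
    rw [h4]
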